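/- Let σ be the standard n-simplex and c a real-valued k-cochain on σ. Then Wc is the unique differential k-form ω on σ such that: (1) ω has affine coefficients; (2) the pullback of ω to every k-face τ of σ is a constant form; (3) ∫_τ ω = ⟨c, τ⟩ for every k-face τ. -/

import Mathlib

/-!
On a `k`-face `S`, the barycentric coordinates of `σ` at the vertices of `S` restrict to those of
the standard `k`-simplex, and the other ones vanish. Writing the Whitney form of a face `S'` as
`k!` times a `(k+1) × (k+1)` determinant in the values of `ν` and `dν`, its pullback to `S`
therefore vanishes unless `S' = S`, and for `S' = S` the column sums `∑ ν = 1`, `∑ dν = 0` reduce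
it to `k! dy¹ ∧ ⋯ ∧ dyᵏ`. As the standard `k`-simplex has volume `1/k!`, `∫_S Wc = ⟨c, S⟩`.

A constant form on a face is determined by its integral, so a competitor has the same pullbacks
as `Wc` to all `k`-faces. At a vertex `p_j` the edges `p_i - p_j` form a basis of `ℝⁿ` and any `k`
of them span a face through `p_j`, so the competitor and `Wc` agree at every vertex as alternating
forms; having affine coefficients, they agree everywhere.
-/

open MeasureTheory Finset

/-- A real-valued function on `ℝⁿ` is affine if it has the form `x ↦ ∑ aᵢ xⁱ + b`. -/
def IsAffineFn {n : ℕ} (f : (Fin n → ℝ) → ℝ) : Prop :=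
  ∃ (a : Fin n → ℝ) (b : ℝ), ∀ x, f x = (∑ i, a i * x i) + b

/-- The standard `n`-simplex `{x : xⁱ ≥ 0, ∑ xⁱ ≤ 1}` in `ℝⁿ`. -/
def stdSimp (n : ℕ) : Set (Fin n → ℝ) :=
  {x | (∀ i, 0 ≤ x i) ∧ (∑ i, x i) ≤ 1}

/-- The basic alternating `k`-form `dx^I` (for a strictly increasing multi-index given by a
`k`-element subset `I` of `{1,…,n}`) evaluated on `k` vectors. -/
def dxI {n k : ℕ} (I : {s : Finset (Fin n) // s.card = k}) (v : Fin k → Fin n → ℝ) : ℝ :=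
  Matrix.det (Matrix.of fun i j => v j ((I.1.orderIsoOfFin I.2 i : Fin n)))

/-- The `k`-form `∑_I f_I dx^I` with coefficient functions `f_I`, evaluated at the point `x`
on the `k` vectors `v`. -/
def formEval {n k : ℕ} (f : {s : Finset (Fin n) // s.card = k} → (Fin n → ℝ) → ℝ)
    (x : Fin n → ℝ) (v : Fin k → Fin n → ℝ) : ℝ :=
  ∑ I : {s : Finset (Fin n) // s.card = k}, f I x * dxI I v

/-- The vertices of the standard `n`-simplex: `p₀ = 0`, `pᵢ = eᵢ`. -/
def vert (n : ℕ) : Fin (n+1) → Fin n → ℝ :=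
  Fin.cases 0 (fun j => Pi.single j 1)

/-- Affine parametrization of the `k`-face of the standard `n`-simplex with vertex set `S`
(vertices taken in increasing order), defined on the standard `k`-simplex. -/
def facePt {n k : ℕ} (S : {s : Finset (Fin (n+1)) // s.card = k+1}) (y : Fin k → ℝ) :
    Fin n → ℝ :=
  vert n ((S.1.orderIsoOfFin S.2 0 : Fin (n+1))) +
    ∑ s : Fin k, y s • (vert n ((S.1.orderIsoOfFin S.2 s.succ : Fin (n+1))) -
      vert n ((S.1.orderIsoOfFin S.2 0 : Fin (n+1))))

/-- The differential of the face parametrization `facePt S`. -/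
def faceDir {n k : ℕ} (S : {s : Finset (Fin (n+1)) // s.card = k+1}) (w : Fin k → ℝ) :
    Fin n → ℝ :=
  ∑ s : Fin k, w s • (vert n ((S.1.orderIsoOfFin S.2 s.succ : Fin (n+1))) -
    vert n ((S.1.orderIsoOfFin S.2 0 : Fin (n+1))))

/-- Barycentric coordinates of the standard `n`-simplex: `ν₀ = 1 - ∑ xⁱ`, `νᵢ = xⁱ`. -/
def nu (n : ℕ) (j : Fin (n+1)) (x : Fin n → ℝ) : ℝ :=
  Fin.cases (1 - ∑ i, x i) (fun i => x i) j

/-- The differentials `dνⱼ` of the barycentric coordinates, as linear functionals. -/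
def dnu (n : ℕ) (j : Fin (n+1)) (v : Fin n → ℝ) : ℝ :=
  Fin.cases (-(∑ i, v i)) (fun i => v i) j

/-- The Whitney form `W τ* = k! ∑ⱼ (-1)ʲ ν_{iⱼ} dν_{i₀} ∧ ⋯ ∧ (omit dν_{iⱼ}) ∧ ⋯ ∧ dν_{i_k}`
of the dual cochain of the face with vertex set `S`, evaluated at `x` on the vectors `v`. -/
def whitneyFace {n k : ℕ} (S : {s : Finset (Fin (n+1)) // s.card = k+1})
    (x : Fin n → ℝ) (v : Fin k → Fin n → ℝ) : ℝ :=
  (Nat.factorial k : ℝ) * ∑ j : Fin (k+1), (-1 : ℝ) ^ (j : ℕ) *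
    nu n ((S.1.orderIsoOfFin S.2 j : Fin (n+1))) x *
    Matrix.det (Matrix.of fun (t : Fin k) (m2 : Fin k) =>
      dnu n ((S.1.orderIsoOfFin S.2 (j.succAbove t) : Fin (n+1))) (v m2))

/-- The Whitney map `W`, extended linearly to all real `k`-cochains. -/
def whitney {n k : ℕ} (c : {s : Finset (Fin (n+1)) // s.card = k+1} → ℝ)
    (x : Fin n → ℝ) (v : Fin k → Fin n → ℝ) : ℝ :=
  ∑ S, c S * whitneyFace S x v

/-- The integral of a `k`-form (given by its evaluation function `F`) over the `k`-face with
vertex set `S`, computed via the parametrization `facePt S`. -/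
noncomputable def faceIntegral {n k : ℕ} (S : {s : Finset (Fin (n+1)) // s.card = k+1})
    (F : (Fin n → ℝ) → (Fin k → Fin n → ℝ) → ℝ) : ℝ :=
  ∫ y in stdSimp k, F (facePt S y) (fun s => faceDir S (Pi.single s 1))

/-- A `k`-form (given by its evaluation function) pulls back to a constant form on every
`k`-face of the standard `n`-simplex. -/
def ConstOnFaces {n k : ℕ} (F : (Fin n → ℝ) → (Fin k → Fin n → ℝ) → ℝ) : Prop :=
  ∀ S : {s : Finset (Fin (n+1)) // s.card = k+1}, ∃ cst : ℝ,
    ∀ y ∈ stdSimp k, ∀ w : Fin k → Fin k → ℝ,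
      F (facePt S y) (fun i => faceDir S (w i)) = cst * Matrix.det (Matrix.of fun i j => w j i)

open Matrix
open scoped Nat

abbrev Face (n k : ℕ) := {s : Finset (Fin (n+1)) // s.card = k+1}

abbrev MultiIndex (n k : ℕ) := {s : Finset (Fin n) // s.card = k}

section Barycentric

variable {n : ℕ}

def dnuLinear (n : ℕ) (j : Fin (n+1)) : (Fin n → ℝ) →ₗ[ℝ] ℝ where
  toFun := dnu n j
  map_add' v w := by
    cases j using Fin.cases <;> simp [dnu, sum_add_distrib]
    ring
  map_smul' r v := by cases j using Fin.cases <;> simp [dnu, mul_sum]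

@[simp] lemma dnuLinear_apply (j : Fin (n+1)) (v : Fin n → ℝ) : dnuLinear n j v = dnu n j v :=
  rfl

lemma nu_add (j : Fin (n+1)) (x v : Fin n → ℝ) : nu n j (x + v) = nu n j x + dnu n j v := by
  cases j using Fin.cases <;> simp [nu, dnu, sum_add_distrib]
  ring

@[simp] lemma vert_zero : vert n 0 = 0 := rfl

@[simp] lemma vert_succ (i : Fin n) : vert n i.succ = Pi.single i 1 := rfl

lemma nu_vert (a b : Fin (n+1)) : nu n a (vert n b) = if a = b then 1 else 0 := by
  cases a using Fin.cases <;> cases b using Fin.cases <;>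
    simp [nu, Pi.single_apply, Fin.succ_ne_zero, eq_comm]

lemma dnu_vert_sub (a b b' : Fin (n+1)) :
    dnu n a (vert n b - vert n b') = (if a = b then 1 else 0) - (if a = b' then 1 else 0) := by
  have h := nu_add a (vert n b') (vert n b - vert n b')
  rw [add_sub_cancel, nu_vert, nu_vert] at h
  linarith

lemma sum_nu (x : Fin n → ℝ) : ∑ j, nu n j x = 1 := by
  simp [Fin.sum_univ_succ, nu]

lemma sum_dnu (v : Fin n → ℝ) : ∑ j, dnu n j v = 0 := by
  simp [Fin.sum_univ_succ, dnu]

lemma vert_mem_stdSimp (j : Fin (n+1)) : vert n j ∈ stdSimp n := by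
  cases j using Fin.cases <;> simp [stdSimp, Pi.single_apply, apply_ite]

end Barycentric

namespace Face

variable {n k : ℕ}

def vertex (S : Face n k) (u : Fin (k+1)) : Fin (n+1) := S.1.orderIsoOfFin S.2 u

lemma vertex_injective (S : Face n k) : Function.Injective S.vertex :=
  Subtype.val_injective.comp (S.1.orderIsoOfFin S.2).injective

lemma vertex_mem (S : Face n k) (u : Fin (k+1)) : S.vertex u ∈ S.1 :=
  (S.1.orderIsoOfFin S.2 u).2

lemma exists_vertex_eq (S : Face n k) {a : Fin (n+1)} (ha : a ∈ S.1) : ∃ u, S.vertex u = a :=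
  ⟨(S.1.orderIsoOfFin S.2).symm ⟨a, ha⟩, by simp [vertex]⟩

lemma eq_of_subset {S S' : Face n k} (h : S'.1 ⊆ S.1) : S' = S :=
  Subtype.ext (Finset.eq_of_subset_of_card_le h (S.2.trans S'.2.symm).le)

end Face

section FaceParametrization

variable {n k : ℕ} (S : Face n k)

lemma faceDir_eq (w : Fin k → ℝ) :
    faceDir S w = ∑ s, w s • (vert n (S.vertex s.succ) - vert n (S.vertex 0)) := rfl

lemma facePt_eq (y : Fin k → ℝ) : facePt S y = vert n (S.vertex 0) + faceDir S y := rfl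

lemma faceDir_sub (w w' : Fin k → ℝ) : faceDir S (w - w') = faceDir S w - faceDir S w' := by
  simp only [faceDir_eq, Pi.sub_apply, sub_smul, sum_sub_distrib]

lemma faceDir_vert (u : Fin (k+1)) :
    faceDir S (vert k u) = vert n (S.vertex u) - vert n (S.vertex 0) := by
  cases u using Fin.cases <;> simp [faceDir_eq, Pi.single_apply]

lemma facePt_vert (u : Fin (k+1)) : facePt S (vert k u) = vert n (S.vertex u) := by
  rw [facePt_eq, faceDir_vert, add_sub_cancel]

lemma dnu_faceDir (a : Fin (n+1)) (w : Fin k → ℝ) :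
    dnu n a (faceDir S w) = ∑ s, w s *
      ((if a = S.vertex s.succ then 1 else 0) - (if a = S.vertex 0 then 1 else 0)) := by
  rw [faceDir_eq, ← dnuLinear_apply, map_sum]
  simp only [map_smul, dnuLinear_apply, dnu_vert_sub, smul_eq_mul]

lemma dnu_faceDir_of_notMem {a : Fin (n+1)} (ha : a ∉ S.1) (w : Fin k → ℝ) :
    dnu n a (faceDir S w) = 0 := by
  have (u : Fin (k+1)) : a ≠ S.vertex u := fun h => ha (h ▸ S.vertex_mem u)
  simp [dnu_faceDir, this]

lemma nu_facePt_of_notMem {a : Fin (n+1)} (ha : a ∉ S.1) (y : Fin k → ℝ) :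
    nu n a (facePt S y) = 0 := by
  have : a ≠ S.vertex 0 := fun h => ha (h ▸ S.vertex_mem 0)
  rw [facePt_eq, nu_add, nu_vert, dnu_faceDir_of_notMem S ha, if_neg this, add_zero]

lemma dnu_vertex_faceDir (u : Fin (k+1)) (w : Fin k → ℝ) :
    dnu n (S.vertex u) (faceDir S w) = dnu k u w := by
  simp only [dnu_faceDir, S.vertex_injective.eq_iff]
  cases u using Fin.cases <;> simp [dnu, Fin.succ_ne_zero, Fin.succ_ne_zero _ |>.symm]

lemma nu_vertex_facePt (u : Fin (k+1)) (y : Fin k → ℝ) :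
    nu n (S.vertex u) (facePt S y) = nu k u y := by
  rw [facePt_eq, nu_add, nu_vert, dnu_vertex_faceDir]
  simp only [S.vertex_injective.eq_iff]
  rw [← nu_vert u 0, vert_zero, ← nu_add, zero_add]

end FaceParametrization

lemma Matrix.det_eq_sum_col_zero_mul_det_of_sum_col_succ_eq_zero {R : Type*} [CommRing R] {k : ℕ}
    (B : Matrix (Fin (k+1)) (Fin (k+1)) R) (h : ∀ m : Fin k, ∑ u, B u m.succ = 0) :
    B.det = (∑ u, B u 0) * (B.submatrix Fin.succ Fin.succ).det := by
  -- adding all other rows to row `0` turns it into the column sums `(∑ u, B u 0, 0, …, 0)`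
  set B' := B.updateRow 0 (∑ u, B u)
  have hdet : B'.det = B.det := by simpa using det_updateRow_sum B 0 (fun _ => 1)
  have hrow (m : Fin (k+1)) : B' 0 m = ∑ u, B u m := by simp [B', Finset.sum_apply m univ B]
  rw [← hdet, det_succ_row_zero, Fin.sum_univ_succ]
  simp only [hrow, h, mul_zero, zero_mul, sum_const_zero, add_zero, Fin.val_zero, pow_zero,
    one_mul, Fin.succAbove_zero]
  congr 2

section WhitneyPullback

variable {n k : ℕ}

def baryMatrix (a : Fin (k+1) → Fin (n+1)) (x : Fin n → ℝ) (v : Fin k → Fin n → ℝ) :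
    Matrix (Fin (k+1)) (Fin (k+1)) ℝ :=
  of fun u => Fin.cons (nu n (a u) x) fun m => dnu n (a u) (v m)

lemma whitneyFace_eq_det (S : Face n k) (x : Fin n → ℝ) (v : Fin k → Fin n → ℝ) :
    whitneyFace S x v = k ! * (baryMatrix S.vertex x v).det := by
  rw [det_succ_column_zero, whitneyFace]
  rfl

lemma det_baryMatrix_id (y : Fin k → ℝ) (w : Fin k → Fin k → ℝ) :
    (baryMatrix id y w).det = (of fun i j => w j i).det := by
  rw [det_eq_sum_col_zero_mul_det_of_sum_col_succ_eq_zero _ fun m => sum_dnu (w m)]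
  simp only [baryMatrix, of_apply, Fin.cons_zero, id, sum_nu, one_mul]
  rfl

lemma baryMatrix_vertex_pullback (S : Face n k) (y : Fin k → ℝ) (w : Fin k → Fin k → ℝ) :
    baryMatrix S.vertex (facePt S y) (fun i => faceDir S (w i)) = baryMatrix id y w := by
  ext u m
  cases m using Fin.cases <;> simp [baryMatrix, nu_vertex_facePt, dnu_vertex_faceDir]

lemma det_baryMatrix_pullback_of_ne {S S' : Face n k} (h : S' ≠ S) (y : Fin k → ℝ)
    (w : Fin k → Fin k → ℝ) :
    (baryMatrix S'.vertex (facePt S y) (fun i => faceDir S (w i))).det = 0 := by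
  obtain ⟨a, haS', haS⟩ := Finset.not_subset.1 (mt Face.eq_of_subset h)
  obtain ⟨u, rfl⟩ := S'.exists_vertex_eq haS'
  refine det_eq_zero_of_row_eq_zero u fun m => ?_
  cases m using Fin.cases <;>
    simp [baryMatrix, nu_facePt_of_notMem S haS, dnu_faceDir_of_notMem S haS]

lemma whitneyFace_pullback (S' S : Face n k) (y : Fin k → ℝ) (w : Fin k → Fin k → ℝ) :
    whitneyFace S' (facePt S y) (fun i => faceDir S (w i)) =
      if S' = S then k ! * (of fun i j => w j i).det else 0 := by
  rw [whitneyFace_eq_det]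
  split_ifs with h
  · rw [h, baryMatrix_vertex_pullback, det_baryMatrix_id]
  · rw [det_baryMatrix_pullback_of_ne h, mul_zero]

lemma whitney_pullback (c : Face n k → ℝ) (S : Face n k) (y : Fin k → ℝ)
    (w : Fin k → Fin k → ℝ) :
    whitney c (facePt S y) (fun i => faceDir S (w i)) = k ! * c S * (of fun i j => w j i).det := by
  simp only [whitney, whitneyFace_pullback, mul_ite, mul_zero, sum_ite_eq', mem_univ, if_true]
  ring

lemma constOnFaces_whitney (c : Face n k → ℝ) : ConstOnFaces (whitney c) :=
  fun S => ⟨k ! * c S, fun y _ w => whitney_pullback c S y w⟩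

end WhitneyPullback

section Volume

def scaledStdSimp (k : ℕ) (r : ℝ) : Set (Fin k → ℝ) :=
  {x | (∀ i, 0 ≤ x i) ∧ ∑ i, x i ≤ r}

lemma stdSimp_eq_scaledStdSimp_one (k : ℕ) : stdSimp k = scaledStdSimp k 1 := rfl

lemma scaledStdSimp_eq_empty (k : ℕ) {r : ℝ} (hr : r < 0) : scaledStdSimp k r = ∅ :=
  Set.eq_empty_of_forall_notMem fun _ hx =>
    (sum_nonneg fun i _ => hx.1 i).not_gt (hx.2.trans_lt hr)

lemma measurableSet_scaledStdSimp (k : ℕ) (r : ℝ) : MeasurableSet (scaledStdSimp k r) := by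
  unfold scaledStdSimp
  measurability

lemma cons_mem_scaledStdSimp_iff {k : ℕ} {r t : ℝ} {x : Fin k → ℝ} :
    (Fin.cons t x : Fin (k+1) → ℝ) ∈ scaledStdSimp (k+1) r ↔
      0 ≤ t ∧ x ∈ scaledStdSimp k (r - t) := by
  simp only [scaledStdSimp, Set.mem_ofPred_eq, Fin.forall_fin_succ, Fin.sum_univ_succ,
    Fin.cons_zero, Fin.cons_succ, le_sub_iff_add_le', and_assoc]

lemma volume_scaledStdSimp_succ (k : ℕ) (r : ℝ) :
    volume (scaledStdSimp (k+1) r) =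
      ∫⁻ t, volume {x : Fin k → ℝ | 0 ≤ t ∧ x ∈ scaledStdSimp k (r - t)} := by
  set e := MeasurableEquiv.piFinSuccAbove (fun _ : Fin (k+1) => ℝ) 0
  have hA : MeasurableSet (e.symm ⁻¹' scaledStdSimp (k+1) r) :=
    e.symm.measurable (measurableSet_scaledStdSimp _ _)
  rw [← (volume_preserving_piFinSuccAbove (fun _ : Fin (k+1) => ℝ) 0).symm.measure_preimage
    (measurableSet_scaledStdSimp _ _).nullMeasurableSet, Measure.volume_eq_prod,
    Measure.prod_apply hA]
  refine lintegral_congr fun t => congrArg volume (Set.ext fun x => ?_)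
  have he : e.symm (t, x) = Fin.cons t x := by simp [e, Fin.consEquiv]
  rw [Set.mem_preimage, Set.mem_preimage, he]
  exact cons_mem_scaledStdSimp_iff

lemma integral_Icc_sub_pow_div_factorial (k : ℕ) {r : ℝ} (hr : 0 ≤ r) :
    ∫ t in Set.Icc 0 r, (r - t) ^ k / k ! = r ^ (k+1) / (k+1) ! := by
  rw [integral_Icc_eq_integral_Ioc, ← intervalIntegral.integral_of_le hr,
    intervalIntegral.integral_div, intervalIntegral.integral_comp_sub_left (· ^ k), integral_pow,
    Nat.factorial_succ]
  push_cast
  field_simp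
  ring

lemma volume_scaledStdSimp (k : ℕ) {r : ℝ} (hr : 0 ≤ r) :
    volume (scaledStdSimp k r) = ENNReal.ofReal (r ^ k / k !) := by
  induction k generalizing r with
  | zero =>
    have : scaledStdSimp 0 r = Set.univ := by simp [scaledStdSimp, hr]
    rw [this, volume_pi, Measure.pi_univ]
    simp
  | succ k ih =>
    have hslice (t : ℝ) : volume {x | 0 ≤ t ∧ x ∈ scaledStdSimp k (r - t)} =
        (Set.Icc 0 r).indicator (fun t => ENNReal.ofReal ((r - t) ^ k / k !)) t := by
      rcases lt_or_ge t 0 with ht | ht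
      · simp [ht.not_ge]
      rcases lt_or_ge r t with hrt | hrt
      · simp [scaledStdSimp_eq_empty k (sub_neg.2 hrt), hrt.not_ge]
      simp [ht, hrt, ih (sub_nonneg.2 hrt)]
    rw [volume_scaledStdSimp_succ]
    simp only [hslice, lintegral_indicator measurableSet_Icc,
      ← integral_Icc_sub_pow_div_factorial k hr]
    refine (ofReal_integral_eq_lintegral_ofReal ?_ ?_).symm
    · exact Continuous.integrableOn_Icc (by fun_prop)
    · filter_upwards [ae_restrict_mem measurableSet_Icc] with t ht
      have : 0 ≤ r - t := sub_nonneg.2 ht.2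
      positivity

lemma measureReal_stdSimp (k : ℕ) : volume.real (stdSimp k) = 1 / k ! := by
  rw [measureReal_def, stdSimp_eq_scaledStdSimp_one, volume_scaledStdSimp k zero_le_one,
    one_pow, ENNReal.toReal_ofReal (by positivity)]

end Volume

section FaceIntegral

variable {n k : ℕ}

lemma det_of_pi_single_one : (of fun i j => (Pi.single j 1 : Fin k → ℝ) i).det = 1 := by
  have : (of fun i j => (Pi.single j 1 : Fin k → ℝ) i) = 1 := by
    ext i j
    simp [Pi.single_apply, one_apply]
  rw [this, det_one]

lemma faceIntegral_eq_of_pullback_eq (S : Face n k)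
    {F : (Fin n → ℝ) → (Fin k → Fin n → ℝ) → ℝ} {a : ℝ}
    (h : ∀ y ∈ stdSimp k, F (facePt S y) (fun s => faceDir S (Pi.single s 1)) = a) :
    faceIntegral S F = a / k ! := by
  rw [faceIntegral, setIntegral_congr_fun (s := stdSimp k) (measurableSet_scaledStdSimp k 1) h,
    setIntegral_const, measureReal_stdSimp, smul_eq_mul]
  ring

lemma faceIntegral_whitney (c : Face n k → ℝ) (S : Face n k) :
    faceIntegral S (whitney c) = c S := by
  rw [faceIntegral_eq_of_pullback_eq S fun y _ => whitney_pullback c S y _, det_of_pi_single_one]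
  field_simp

lemma pullback_eq_whitney_of_faceIntegral_eq
    {F : (Fin n → ℝ) → (Fin k → Fin n → ℝ) → ℝ} {c : Face n k → ℝ} (hF : ConstOnFaces F)
    (hint : ∀ S, faceIntegral S F = c S)
    (S : Face n k) {y : Fin k → ℝ} (hy : y ∈ stdSimp k) (w : Fin k → Fin k → ℝ) :
    F (facePt S y) (fun i => faceDir S (w i)) =
      whitney c (facePt S y) (fun i => faceDir S (w i)) := by
  obtain ⟨a, ha⟩ := hF S
  have hint_eq : a / k ! = c S := by
    rw [← hint S, faceIntegral_eq_of_pullback_eq S fun y hy => by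
      rw [ha y hy, det_of_pi_single_one, mul_one]]
  rw [ha y hy, whitney_pullback, ← hint_eq]
  field_simp

end FaceIntegral

section Affine

variable {n : ℕ}

lemma isAffineFn_const (r : ℝ) : IsAffineFn fun _ : Fin n → ℝ => r :=
  ⟨0, r, fun x => by simp⟩

lemma IsAffineFn.add {f g : (Fin n → ℝ) → ℝ} (hf : IsAffineFn f) (hg : IsAffineFn g) :
    IsAffineFn fun x => f x + g x := by
  obtain ⟨a, b, hf⟩ := hf
  obtain ⟨a', b', hg⟩ := hg
  refine ⟨a + a', b + b', fun x => ?_⟩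
  simp only [hf, hg, Pi.add_apply, add_mul, sum_add_distrib]
  ring

lemma IsAffineFn.const_mul {f : (Fin n → ℝ) → ℝ} (hf : IsAffineFn f) (r : ℝ) :
    IsAffineFn fun x => r * f x := by
  obtain ⟨a, b, hf⟩ := hf
  refine ⟨r • a, r * b, fun x => ?_⟩
  simp only [hf, Pi.smul_apply, smul_eq_mul, mul_add, mul_sum, mul_assoc]

lemma IsAffineFn.mul_const {f : (Fin n → ℝ) → ℝ} (hf : IsAffineFn f) (r : ℝ) :
    IsAffineFn fun x => f x * r := by
  simpa only [mul_comm] using hf.const_mul r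

lemma isAffineFn_sum {ι : Type*} (s : Finset ι) {f : ι → (Fin n → ℝ) → ℝ}
    (hf : ∀ i ∈ s, IsAffineFn (f i)) : IsAffineFn fun x => ∑ i ∈ s, f i x := by
  induction s using Finset.cons_induction with
  | empty => simpa using isAffineFn_const 0
  | cons i s hi ih =>
    simp only [sum_cons]
    exact (hf i (mem_cons_self i s)).add (ih fun j hj => hf j (mem_cons_of_mem hj))

lemma isAffineFn_nu (j : Fin (n+1)) : IsAffineFn (nu n j) := by
  cases j using Fin.cases with
  | zero => exact ⟨fun _ => -1, 1, fun x => by simp [nu, sum_neg_distrib]; ring⟩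
  | succ i => exact ⟨Pi.single i 1, 0, fun x => by simp [nu, Pi.single_apply]⟩

lemma IsAffineFn.eq_of_eq_on_vert {f g : (Fin n → ℝ) → ℝ} (hf : IsAffineFn f)
    (hg : IsAffineFn g) (h : ∀ j, f (vert n j) = g (vert n j)) : f = g := by
  obtain ⟨a, b, hf⟩ := hf
  obtain ⟨a', b', hg⟩ := hg
  have hb : b = b' := by simpa [hf, hg] using h 0
  have ha : a = a' := funext fun i => by simpa [hf, hg, hb, Pi.single_apply] using h i.succ
  funext x
  rw [hf, hg, ha, hb]

end Affine

lemma isAffineFn_whitney {n k : ℕ} (c : Face n k → ℝ) (v : Fin k → Fin n → ℝ) :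
    IsAffineFn fun x => whitney c x v := by
  unfold whitney whitneyFace
  refine isAffineFn_sum _ fun S _ => IsAffineFn.const_mul (IsAffineFn.const_mul ?_ _) _
  exact isAffineFn_sum _ fun j _ => ((isAffineFn_nu _).const_mul _).mul_const _

lemma isAffineFn_formEval {n k : ℕ} {f : MultiIndex n k → (Fin n → ℝ) → ℝ}
    (hf : ∀ I, IsAffineFn (f I)) (v : Fin k → Fin n → ℝ) :
    IsAffineFn fun x => formEval f x v :=
  isAffineFn_sum _ fun I _ => (hf I).mul_const _

section Alternating

lemma AlternatingMap.sum_apply {R M N ι α : Type*} [CommSemiring R] [AddCommMonoid M] [Module R M]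
    [AddCommMonoid N] [Module R N] (s : Finset α) (f : α → M [⋀^ι]→ₗ[R] N)
    (v : ι → M) :
    (∑ a ∈ s, f a) v = ∑ a ∈ s, f a v := by
  induction s using Finset.cons_induction with
  | empty => simp
  | cons a s _ ih => simp [sum_cons, ih]

lemma Matrix.detRowAlternating_compLinearMap_apply {R E : Type*} [CommRing R] [AddCommGroup E]
    [Module R E] {k : ℕ} (L : E →ₗ[R] (Fin k → R)) (v : Fin k → E) :
    detRowAlternating.compLinearMap L v = (of fun i j => L (v j) i).det := by
  rw [AlternatingMap.compLinearMap_apply, ← det_transpose]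
  rfl

variable {n k : ℕ}

noncomputable def formAlt (f : MultiIndex n k → (Fin n → ℝ) → ℝ) (x : Fin n → ℝ) :
    (Fin n → ℝ) [⋀^Fin k]→ₗ[ℝ] ℝ :=
  ∑ I : MultiIndex n k, f I x •
    detRowAlternating.compLinearMap
      (LinearMap.pi fun i => LinearMap.proj (I.1.orderIsoOfFin I.2 i : Fin n))

lemma formAlt_apply (f : MultiIndex n k → (Fin n → ℝ) → ℝ) (x : Fin n → ℝ)
    (v : Fin k → Fin n → ℝ) :
    formAlt f x v = formEval f x v := by
  simp only [formAlt, AlternatingMap.sum_apply, AlternatingMap.smul_apply,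
    detRowAlternating_compLinearMap_apply, smul_eq_mul]
  rfl

noncomputable def whitneyAlt (c : Face n k → ℝ) (x : Fin n → ℝ) :
    (Fin n → ℝ) [⋀^Fin k]→ₗ[ℝ] ℝ :=
  ∑ S, c S • (k ! : ℝ) • ∑ j : Fin (k+1), ((-1) ^ (j : ℕ) * nu n (S.vertex j) x) •
    detRowAlternating.compLinearMap
      (LinearMap.pi fun t => dnuLinear n (S.vertex (j.succAbove t)))

lemma whitneyAlt_apply (c : Face n k → ℝ) (x : Fin n → ℝ) (v : Fin k → Fin n → ℝ) :
    whitneyAlt c x v = whitney c x v := by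
  simp only [whitneyAlt, AlternatingMap.sum_apply, AlternatingMap.smul_apply,
    detRowAlternating_compLinearMap_apply, smul_eq_mul, whitney, whitneyFace, mul_sum,
    mul_assoc]
  rfl

end Alternating

section Uniqueness

variable {n k : ℕ}

lemma affineIndependent_vert (n : ℕ) : AffineIndependent ℝ (vert n) := by
  rw [affineIndependent_iff_linearIndependent_vsub ℝ _ 0]
  have : (fun i : {j : Fin (n+1) // j ≠ 0} => vert n i -ᵥ vert n 0) =
      Pi.basisFun ℝ (Fin n) ∘ fun i => i.1.pred i.2 := by
    funext ⟨i, hi⟩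
    obtain ⟨i, rfl⟩ := Fin.exists_succ_eq.2 hi
    simp
  rw [this]
  exact (Pi.basisFun ℝ (Fin n)).linearIndependent.comp _
    fun i j h => Subtype.ext (Fin.pred_inj.1 h)

lemma linearIndependent_vert_sub (j : Fin (n+1)) :
    LinearIndependent ℝ fun i : Fin n => vert n (j.succAbove i) - vert n j :=
  ((affineIndependent_iff_linearIndependent_vsub ℝ _ j).1 (affineIndependent_vert n)).comp
    (fun i => ⟨j.succAbove i, Fin.succAbove_ne j i⟩)
    fun _ _ h => Fin.succAbove_right_injective (congrArg Subtype.val h)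

noncomputable def vertexEdgeBasis (n : ℕ) (j : Fin (n+1)) :
    Module.Basis (Fin n) ℝ (Fin n → ℝ) :=
  basisOfLinearIndependentOfCardEqFinrank' _ (linearIndependent_vert_sub j) (by simp)

lemma vertexEdgeBasis_apply (j : Fin (n+1)) (i : Fin n) :
    vertexEdgeBasis n j i = vert n (j.succAbove i) - vert n j := by
  simp [vertexEdgeBasis]

lemma apply_vert_edges_eq_of_pullback_eq
    {F G : (Fin n → ℝ) → (Fin k → Fin n → ℝ) → ℝ}
    (h : ∀ S : Face n k, ∀ y ∈ stdSimp k, ∀ w : Fin k → Fin k → ℝ,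
      F (facePt S y) (fun i => faceDir S (w i)) = G (facePt S y) (fun i => faceDir S (w i)))
    (S : Face n k) (u : Fin (k+1)) (p : Fin k → Fin (k+1)) :
    F (vert n (S.vertex u)) (fun t => vert n (S.vertex (p t)) - vert n (S.vertex u)) =
      G (vert n (S.vertex u)) (fun t => vert n (S.vertex (p t)) - vert n (S.vertex u)) := by
  have hw (t : Fin k) : faceDir S (vert k (p t) - vert k u) =
      vert n (S.vertex (p t)) - vert n (S.vertex u) := by
    rw [faceDir_sub, faceDir_vert, faceDir_vert, sub_sub_sub_cancel_right]
  simpa only [facePt_vert, hw] using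
    h S (vert k u) (vert_mem_stdSimp u) fun t => vert k (p t) - vert k u

lemma eq_at_vert_of_pullback_eq
    {ω ω' : (Fin n → ℝ) → (Fin n → ℝ) [⋀^Fin k]→ₗ[ℝ] ℝ}
    (h : ∀ S : Face n k, ∀ y ∈ stdSimp k, ∀ w : Fin k → Fin k → ℝ,
      ω (facePt S y) (fun i => faceDir S (w i)) = ω' (facePt S y) (fun i => faceDir S (w i)))
    (j : Fin (n+1)) : ω (vert n j) = ω' (vert n j) := by
  refine (vertexEdgeBasis n j).ext_alternating fun m hm => ?_
  -- `p_j` and the `p_{j.succAbove (m t)}` are the vertices of a `k`-face `S`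
  let T := univ.map ⟨j.succAbove ∘ m, Fin.succAbove_right_injective.comp hm⟩
  have hj : j ∉ T := by simp [T, Fin.succAbove_ne]
  let S : Face n k := ⟨insert j T, by rw [card_insert_of_notMem hj, card_map, card_fin]⟩
  obtain ⟨u, hu⟩ := S.exists_vertex_eq (mem_insert_self j T)
  choose p hp using fun t => S.exists_vertex_eq (mem_insert_of_mem (mem_map_of_mem _ (mem_univ t)))
  simpa [vertexEdgeBasis_apply, hu, hp] using
    apply_vert_edges_eq_of_pullback_eq (F := fun x => ω x) (G := fun x => ω' x) h S u p

lemma eq_of_pullback_eq {ω ω' : (Fin n → ℝ) → (Fin n → ℝ) [⋀^Fin k]→ₗ[ℝ] ℝ}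
    (hω : ∀ v, IsAffineFn fun x => ω x v) (hω' : ∀ v, IsAffineFn fun x => ω' x v)
    (h : ∀ S : Face n k, ∀ y ∈ stdSimp k, ∀ w : Fin k → Fin k → ℝ,
      ω (facePt S y) (fun i => faceDir S (w i)) = ω' (facePt S y) (fun i => faceDir S (w i))) :
    ω = ω' := by
  funext x
  ext v
  refine congrFun ((hω v).eq_of_eq_on_vert (hω' v) fun j => ?_) x
  rw [eq_at_vert_of_pullback_eq h j]

end Uniqueness

theorem whitney_characterization_general {n k : ℕ}
    (c : {s : Finset (Fin (n+1)) // s.card = k+1} → ℝ) :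
    ((∀ v : Fin k → Fin n → ℝ, IsAffineFn (fun x => whitney c x v)) ∧
      ConstOnFaces (whitney c) ∧
      (∀ S : {s : Finset (Fin (n+1)) // s.card = k+1}, faceIntegral S (whitney c) = c S)) ∧
    (∀ f : {s : Finset (Fin n) // s.card = k} → (Fin n → ℝ) → ℝ,
      (∀ I, IsAffineFn (f I)) → ConstOnFaces (formEval f) →
      (∀ S : {s : Finset (Fin (n+1)) // s.card = k+1}, faceIntegral S (formEval f) = c S) →
      ∀ x ∈ stdSimp n, ∀ v : Fin k → Fin n → ℝ, formEval f x v = whitney c x v) := by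
  refine ⟨⟨isAffineFn_whitney c, constOnFaces_whitney c, faceIntegral_whitney c⟩, ?_⟩
  intro f hf hconst hint x _ v
  have hpullback := pullback_eq_whitney_of_faceIntegral_eq hconst hint
  have h : formAlt f = whitneyAlt c := by
    refine eq_of_pullback_eq (fun v => ?_) (fun v => ?_) fun S y hy w => ?_
    · simpa only [formAlt_apply] using isAffineFn_formEval hf v
    · simpa only [whitneyAlt_apply] using isAffineFn_whitney c v
    · simpa only [formAlt_apply, whitneyAlt_apply] using hpullback S hy w
  rw [← formAlt_apply, ← whitneyAlt_apply, h]

/-- Main theorem: `Wc` is the unique `k`-form on the standard `n`-simplex with affine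
coefficients, constant pullbacks to all `k`-faces, and prescribed integrals `⟨c, τ⟩` over
all `k`-faces `τ`. -/
theorem whitney_characterization {n k : ℕ} (hk : k ≤ n)
    (c : {s : Finset (Fin (n+1)) // s.card = k+1} → ℝ) :
    ((∀ v : Fin k → Fin n → ℝ, IsAffineFn (fun x => whitney c x v)) ∧
      ConstOnFaces (whitney c) ∧
      (∀ S : {s : Finset (Fin (n+1)) // s.card = k+1}, faceIntegral S (whitney c) = c S)) ∧
    (∀ f : {s : Finset (Fin n) // s.card = k} → (Fin n → ℝ) → ℝ,
      (∀ I, IsAffineFn (f I)) → ConstOnFaces (formEval f) →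
      (∀ S : {s : Finset (Fin (n+1)) // s.card = k+1}, faceIntegral S (formEval f) = c S) →
      ∀ x ∈ stdSimp n, ∀ v : Fin k → Fin n → ℝ, formEval f x v = whitney c x v) :=
  whitney_characterization_general c
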